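/- arXiv:2111.12404 — 2 statements merged into one kernel-verified Lean document; each statement's English description precedes it below -/
import Mathlib

section
/- Let α ≥ 1 and β > 0 be real numbers and let Ei_{α,β}(x) = ∫₀^x (E_{α,β}(t) − 1/Γ(β))/t dt, where E_{α,β}(t) = Σ_{k=0}^∞ t^k / Γ(αk+β). Then for every real s > 1, ∫₀^∞ e^{−st} Ei_{α,β}(t) dt = Σ_{k=1}^∞ ((k−1)! / Γ(αk+β)) · s^{−(k+1)}, where both the integral and the series converge. -/
/-!
For `u ≠ 0`, `(E_{α,β}(u) - 1/Γ(β)) / u` is the power series `∑ u^k / Γ(α(k+1)+β)` with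
nonnegative coefficients, so `Ei_{α,β}(t) = ∑ t^(k+1) / ((k+1) Γ(α(k+1)+β))`, and the Laplace
transform may be taken termwise with `∫₀^∞ e^{-st} t^(k+1) dt = (k+1)! / s^(k+2)`: for nonnegative
terms, summability of the integrals is all that is needed. For `α ≥ 1` and `k ≥ 1` we have
`k! ≤ Γ(α(k+1)+β)`, so the resulting series is dominated by a geometric one when `s > 1`.
-/
open Real MeasureTheory Set
open scoped Nat

namespace MeasureTheory

variable {X E ι : Type*} [MeasurableSpace X] {μ : Measure X} [NormedAddCommGroup E]
  [CompleteSpace E] [Countable ι]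

/-- The series converges in `L¹`, and `L¹`-convergent series converge pointwise a.e. -/
theorem integrable_tsum_of_summable_integral_norm {F : ι → X → E}
    (hF_int : ∀ i, Integrable (F i) μ) (hF_sum : Summable fun i ↦ ∫ a, ‖F i a‖ ∂μ) :
    Integrable (fun a ↦ ∑' i, F i a) μ := by
  let f : ι → X →₁[μ] E := fun i ↦ (hF_int i).toL1 (F i)
  have hf : ∑' i, ‖f i‖ₑ ≠ ⊤ := by
    rw [tsum_enorm_ne_top_iff_summable_norm]
    simpa only [f, L1.norm_of_fun_eq_integral_norm] using hF_sum
  refine (L1.integrable_coeFn (∑' i, f i)).congr ?_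
  filter_upwards [Lp.coeFn_tsum hf, ae_all_iff.2 fun i ↦ (hF_int i).coeFn_toL1] with a hsum hF
  rw [hsum]
  exact tsum_congr hF

theorem integrable_tsum_and_hasSum_integral_of_nonneg {F : ι → X → ℝ}
    (hF_nonneg : ∀ i, 0 ≤ᵐ[μ] F i) (hF_int : ∀ i, Integrable (F i) μ)
    (hF_sum : Summable fun i ↦ ∫ a, F i a ∂μ) :
    Integrable (fun a ↦ ∑' i, F i a) μ ∧
      HasSum (fun i ↦ ∫ a, F i a ∂μ) (∫ a, ∑' i, F i a ∂μ) := by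
  have hF_norm : ∀ i, ∫ a, ‖F i a‖ ∂μ = ∫ a, F i a ∂μ := fun i ↦
    integral_congr_ae ((hF_nonneg i).mono fun a ha ↦ norm_of_nonneg ha)
  replace hF_sum : Summable fun i ↦ ∫ a, ‖F i a‖ ∂μ := by simpa only [hF_norm] using hF_sum
  exact ⟨integrable_tsum_of_summable_integral_norm hF_int hF_sum,
    by simpa only [hF_norm] using hasSum_integral_of_summable_integral_norm hF_int hF_sum⟩

end MeasureTheory

theorem integral_exp_neg_mul_mul_pow_Ioi {s : ℝ} (hs : 0 < s) (n : ℕ) :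
    ∫ t in Ioi (0:ℝ), exp (-(s * t)) * t ^ n = n ! / s ^ (n + 1) := by
  have h := integral_rpow_mul_exp_neg_mul_Ioi (a := n + 1) (by positivity) hs
  simp only [add_sub_cancel_right, rpow_natCast, Gamma_nat_eq_factorial] at h
  simp_rw [mul_comm (exp _), h, ← Nat.cast_succ, rpow_natCast, one_div, inv_pow, inv_mul_eq_div]

theorem integrableOn_exp_neg_mul_mul_pow_Ioi {s : ℝ} (hs : 0 < s) (n : ℕ) :
    IntegrableOn (fun t ↦ exp (-(s * t)) * t ^ n) (Ioi 0) := by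
  have h := integrableOn_rpow_mul_exp_neg_mul_rpow (p := 1) (s := n) (b := s)
    (by linarith [n.cast_nonneg (α := ℝ)]) one_pos hs
  refine h.congr_fun (fun t _ ↦ ?_) measurableSet_Ioi
  simp only [rpow_one, rpow_natCast, neg_mul]
  exact mul_comm _ _

section PowerSeries

variable {a : ℕ → ℝ}

theorem summable_mul_pow_of_summable_mul_factorial_div_pow (ha : ∀ n, 0 ≤ a n) {s : ℝ}
    (hs : 0 < s) (h : Summable fun n ↦ a n * n ! / s ^ (n + 2)) (u : ℝ) :
    Summable fun n ↦ a n * u ^ n := by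
  set B := ∑' n, a n * n ! / s ^ (n + 2)
  have hB : ∀ n, a n * n ! / s ^ (n + 2) ≤ B := fun n ↦
    h.le_tsum n fun j _ ↦ by have := ha j; positivity
  refine .of_norm_bounded ((summable_pow_div_factorial (s * |u|)).mul_left (B * s ^ 2))
    fun n ↦ ?_
  calc ‖a n * u ^ n‖ = a n * n ! / s ^ (n + 2) * (s ^ 2 * ((s * |u|) ^ n / n !)) := by
        rw [norm_mul, norm_pow, norm_of_nonneg (ha n), norm_eq_abs]
        field_simp
        ring
    _ ≤ B * (s ^ 2 * ((s * |u|) ^ n / n !)) := by gcongr; exact hB n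
    _ = B * s ^ 2 * ((s * |u|) ^ n / n !) := by ring

theorem intervalIntegral_tsum_mul_pow (ha : ∀ n, 0 ≤ a n) {t : ℝ} (ht : 0 ≤ t)
    (h : Summable fun n ↦ a n * t ^ n) :
    ∫ u in (0:ℝ)..t, ∑' n, a n * u ^ n = ∑' n, a n * (t ^ (n + 1) / (n + 1)) := by
  have hval : ∀ n, ∫ u in Ioc 0 t, a n * u ^ n = a n * (t ^ (n + 1) / (n + 1)) := fun n ↦ by
    rw [← intervalIntegral.integral_of_le ht, intervalIntegral.integral_const_mul, integral_pow,
      zero_pow n.succ_ne_zero, sub_zero]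
  have hsum : Summable fun n ↦ a n * (t ^ (n + 1) / (n + 1)) := by
    refine .of_nonneg_of_le (fun n ↦ by have := ha n; positivity) (fun n ↦ ?_) (h.mul_left t)
    calc a n * (t ^ (n + 1) / (n + 1)) ≤ a n * t ^ (n + 1) := by
          have := ha n
          gcongr
          exact div_le_self (by positivity) (by linarith [n.cast_nonneg (α := ℝ)])
      _ = t * (a n * t ^ n) := by ring
  rw [intervalIntegral.integral_of_le ht]
  refine ((integrable_tsum_and_hasSum_integral_of_nonneg (fun n ↦ ?_) (fun n ↦ ?_)
    (by simpa only [hval] using hsum)).2.tsum_eq.symm.trans (tsum_congr hval))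
  · exact ae_restrict_of_forall_mem measurableSet_Ioc fun u hu ↦ by
      have := ha n; have := hu.1.le; positivity
  · exact (by fun_prop : Continuous fun u : ℝ ↦ a n * u ^ n).integrableOn_Ioc

theorem laplace_intervalIntegral_tsum_mul_pow (ha : ∀ n, 0 ≤ a n) {s : ℝ} (hs : 0 < s)
    (h : Summable fun n ↦ a n * n ! / s ^ (n + 2)) :
    IntegrableOn (fun t ↦ exp (-(s * t)) * ∫ u in (0:ℝ)..t, ∑' n, a n * u ^ n) (Ioi 0) ∧
      ∫ t in Ioi (0:ℝ), exp (-(s * t)) * ∫ u in (0:ℝ)..t, ∑' n, a n * u ^ n =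
        ∑' n, a n * n ! / s ^ (n + 2) := by
  set F : ℕ → ℝ → ℝ := fun n t ↦ exp (-(s * t)) * (a n * (t ^ (n + 1) / (n + 1)))
  have hF_tsum : EqOn (fun t ↦ exp (-(s * t)) * ∫ u in (0:ℝ)..t, ∑' n, a n * u ^ n)
      (fun t ↦ ∑' n, F n t) (Ioi 0) := fun t ht ↦ by
    simp only [F]
    rw [intervalIntegral_tsum_mul_pow ha ht.le
      (summable_mul_pow_of_summable_mul_factorial_div_pow ha hs h t), tsum_mul_left]
  have hF_eq : ∀ n, F n = fun t ↦ a n / (n + 1) * (exp (-(s * t)) * t ^ (n + 1)) := fun n ↦ by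
    funext t
    ring
  have hF_int : ∀ n, IntegrableOn (F n) (Ioi 0) := fun n ↦ by
    rw [hF_eq]
    exact (integrableOn_exp_neg_mul_mul_pow_Ioi hs (n + 1)).const_mul _
  have hF_integral : ∀ n, ∫ t in Ioi (0:ℝ), F n t = a n * n ! / s ^ (n + 2) := fun n ↦ by
    rw [hF_eq, integral_const_mul, integral_exp_neg_mul_mul_pow_Ioi hs, Nat.factorial_succ]
    push_cast
    field_simp
  obtain ⟨hF_tsum_int, hF_hasSum⟩ := integrable_tsum_and_hasSum_integral_of_nonneg
    (fun n ↦ ae_restrict_of_forall_mem measurableSet_Ioi fun t (ht : 0 < t) ↦ by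
      have := ha n; positivity)
    hF_int (by simpa only [hF_integral] using h)
  refine ⟨IntegrableOn.congr_fun hF_tsum_int hF_tsum.symm measurableSet_Ioi, ?_⟩
  rw [setIntegral_congr_fun measurableSet_Ioi hF_tsum, ← hF_hasSum.tsum_eq]
  exact tsum_congr hF_integral

end PowerSeries

theorem tsum_mul_pow_sub_div_eq {c : ℕ → ℝ} {u : ℝ} (hu : u ≠ 0)
    (h : Summable fun k ↦ c (k + 1) * u ^ k) :
    ((∑' k, c k * u ^ k) - c 0) / u = ∑' k, c (k + 1) * u ^ k := by
  have h' : Summable fun k ↦ c k * u ^ k :=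
    (summable_nat_add_iff 1).1 <| (h.mul_left u).congr fun k ↦ by ring
  rw [h'.tsum_eq_zero_add, pow_zero, mul_one, add_sub_cancel_left, ← tsum_div_const]
  exact tsum_congr fun k ↦ by field_simp; ring

theorem Real.factorial_le_Gamma {k : ℕ} (hk : 1 ≤ k) {x : ℝ} (hx : k + 1 ≤ x) :
    (k ! : ℝ) ≤ Gamma x := by
  have hk' : (2:ℝ) ≤ k + 1 := by norm_cast; omega
  rw [← Gamma_nat_eq_factorial]
  exact Gamma_strictMonoOn_Ici.monotoneOn hk' (hk'.trans hx) hx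

section MittagLeffler

variable {α β : ℝ}

theorem factorial_div_Gamma_le (hα : 1 ≤ α) (hβ : 0 < β) (k : ℕ) :
    (k ! : ℝ) / Gamma (α * (k + 1) + β) ≤ max 1 (Gamma (α + β))⁻¹ := by
  rcases k.eq_zero_or_pos with rfl | hk
  · simp
  · refine (div_le_one (Gamma_pos_of_pos (by positivity)) |>.2 ?_).trans (le_max_left _ _)
    exact Real.factorial_le_Gamma hk (by nlinarith [k.cast_nonneg (α := ℝ)])

theorem summable_factorial_div_Gamma_div_pow (hα : 1 ≤ α) (hβ : 0 < β) {s : ℝ} (hs : 1 < s) :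
    Summable fun k : ℕ ↦ (k ! : ℝ) / Gamma (α * (k + 1) + β) / s ^ (k + 2) := by
  set C := max 1 (Gamma (α + β))⁻¹
  have hs0 : 0 < s := one_pos.trans hs
  refine .of_nonneg_of_le (fun k ↦ ?_) (fun k ↦ ?_)
    ((summable_geometric_of_lt_one (by positivity) (inv_lt_one_of_one_lt₀ hs)).mul_left
      (C / s ^ 2))
  · have := Gamma_pos_of_pos (show 0 < α * (k + 1) + β by positivity)
    positivity
  · calc (k ! : ℝ) / Gamma (α * (k + 1) + β) / s ^ (k + 2) ≤ C / s ^ (k + 2) := by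
          gcongr
          exact factorial_div_Gamma_le hα hβ k
      _ = C / s ^ 2 * s⁻¹ ^ k := by
          rw [inv_pow, pow_add]
          field_simp

end MittagLeffler

/-- Laplace transform of the integral Mittag-Leffler function. -/
theorem laplace_integral_mittagLeffler (α β s : ℝ) (hα : 1 ≤ α) (hβ : 0 < β) (hs : 1 < s) :
    IntegrableOn
      (fun t : ℝ => Real.exp (-(s * t)) *
        ∫ u in (0:ℝ)..t,
          ((∑' k : ℕ, u ^ k / Real.Gamma (α * k + β)) - 1 / Real.Gamma β) / u)
      (Set.Ioi 0) ∧
    Summable (fun k : ℕ =>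
      (Nat.factorial k : ℝ) / Real.Gamma (α * (k + 1) + β) / s ^ (k + 2)) ∧
    (∫ t in Set.Ioi (0:ℝ),
        Real.exp (-(s * t)) *
          ∫ u in (0:ℝ)..t,
            ((∑' k : ℕ, u ^ k / Real.Gamma (α * k + β)) - 1 / Real.Gamma β) / u)
      = ∑' k : ℕ, (Nat.factorial k : ℝ) / Real.Gamma (α * (k + 1) + β) / s ^ (k + 2) := by
  set c : ℕ → ℝ := fun k ↦ (Gamma (α * k + β))⁻¹
  have hc : ∀ n, 0 ≤ c (n + 1) := fun n ↦ inv_nonneg.2 (Gamma_pos_of_pos (by positivity)).le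
  have hs0 : 0 < s := one_pos.trans hs
  have hsum := summable_factorial_div_Gamma_div_pow hα hβ hs
  have hsum' : Summable fun n ↦ c (n + 1) * n ! / s ^ (n + 2) := by
    simpa only [c, Nat.cast_succ, inv_mul_eq_div] using hsum
  have hEi : ∀ t, ∫ u in (0:ℝ)..t, ((∑' k : ℕ, u ^ k / Gamma (α * k + β)) - 1 / Gamma β) / u =
      ∫ u in (0:ℝ)..t, ∑' n, c (n + 1) * u ^ n := fun t ↦
    intervalIntegral.integral_congr_ae <| by
      filter_upwards [volume.ae_ne 0] with u hu _
      simpa [c, div_eq_inv_mul] using tsum_mul_pow_sub_div_eq hu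
        (summable_mul_pow_of_summable_mul_factorial_div_pow hc hs0 hsum' u)
  obtain ⟨hint, hlaplace⟩ := laplace_intervalIntegral_tsum_mul_pow hc hs0 hsum'
  simp only [hEi]
  refine ⟨hint, hsum, hlaplace.trans (tsum_congr fun n ↦ ?_)⟩
  simp only [c, Nat.cast_succ, inv_mul_eq_div]
end

section
/- For every real x > 0, the integral Wright function Wi_{1,1/2} satisfies Σ_{k=1}^∞ x^k / (k · k! · Γ(k + 1/2)) = (2/√π) ∫₀^{2√x} (cosh t − 1)/t dt. Equivalently, Wi_{1,1/2}(x) = −(2γ + ln 4 + ln x − 2·Chi(2√x))/√π, where γ is the Euler–Mascheroni constant and Chi(y) = γ + ln y + ∫₀^y (cosh u − 1)/u du. -/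
/-!
Since `Γ(k + 3/2) (k + 1)! = (2k + 2)! √π / 4^(k + 1)`, the substitution `x = y² / 4` turns the
`k`-th term of the series into `(2/√π) y^(2k+2) / ((2k + 2) (2k + 2)!)`, which is the integral over
`[0, y]` of the `k`-th term of the Taylor series `(cosh t - 1)/t = ∑ t^(2k+1)/(2k + 2)!`.
The Taylor series is integrated termwise by dominated convergence. The second identity is the
first one rewritten with `ln(2√x) = (ln 4 + ln x)/2`.
-/

open Real MeasureTheory
open scoped Nat Interval

theorem Real.factorial_mul_Gamma_nat_add_half (n : ℕ) :
    n ! * Gamma (n + 1 / 2) = (2 * n)! * √π / 4 ^ n := by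
  cases n with
  | zero => simp [-one_div, Gamma_one_half_eq]
  | succ k =>
    have hfac : (2 * (k + 1))! = 2 ^ (k + 1) * (k + 1)! * (2 * k + 1)‼ := by
      rw [← Nat.doubleFactorial_two_mul, mul_add, mul_one, Nat.factorial_eq_mul_doubleFactorial]
    have hfour : (4 : ℝ) ^ (k + 1) = 2 ^ (k + 1) * 2 ^ (k + 1) := by rw [← mul_pow]; norm_num
    rw [Nat.cast_succ, Gamma_nat_add_one_add_half, hfac, hfour]
    push_cast
    field_simp

/-- At `t = 0` both sides vanish, the right-hand side because `0 / 0 = 0`. -/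
theorem Real.hasSum_cosh_sub_one_div (t : ℝ) :
    HasSum (fun m : ℕ => t ^ (2 * m + 1) / (2 * m + 2)!) ((cosh t - 1) / t) := by
  have hcosh : HasSum (fun m : ℕ => t ^ (2 * m + 2) / (2 * m + 2)!) (cosh t - 1) := by
    simpa [mul_add] using (hasSum_nat_add_iff' 1).mpr (hasSum_cosh t)
  refine (hcosh.div_const t).congr_fun fun m => ?_
  rcases eq_or_ne t 0 with rfl | ht
  · simp
  · field_simp
    ring

theorem Real.hasSum_integral_cosh_sub_one_div (y : ℝ) :
    HasSum (fun m : ℕ => y ^ (2 * m + 2) / ((2 * m + 2) * (2 * m + 2)!))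
      (∫ t in (0 : ℝ)..y, (cosh t - 1) / t) := by
  have hterm (m : ℕ) : ∫ t in (0 : ℝ)..y, t ^ (2 * m + 1) / (2 * m + 2)! =
      y ^ (2 * m + 2) / ((2 * m + 2) * (2 * m + 2)!) := by
    rw [intervalIntegral.integral_div, integral_pow, div_div]
    push_cast
    ring_nf
  have hbound (m : ℕ) (t : ℝ) (ht : t ∈ Ι 0 y) :
      ‖t ^ (2 * m + 1) / (2 * m + 2)!‖ ≤ |y| ^ (2 * m + 1) / (2 * m + 2)! := by
    have hty : |t| ≤ |y| := by simpa using Set.abs_sub_left_of_mem_uIcc (Set.uIoc_subset_uIcc ht)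
    rw [norm_div, norm_pow, norm_eq_abs, Real.norm_natCast]
    gcongr
  simpa only [hterm] using intervalIntegral.hasSum_integral_of_dominated_convergence (μ := volume)
    (fun m _ => |y| ^ (2 * m + 1) / (2 * m + 2)!)
    (fun m => (by fun_prop : Continuous fun t : ℝ => t ^ (2 * m + 1) / (2 * m + 2)!)
      |>.aestronglyMeasurable)
    (fun m => ae_of_all _ (hbound m))
    (ae_of_all _ fun _ _ => (hasSum_cosh_sub_one_div |y|).summable)
    intervalIntegrable_const
    (ae_of_all _ fun t _ => hasSum_cosh_sub_one_div t)

theorem Real.pow_div_mul_factorial_mul_Gamma_add_half (y : ℝ) (k : ℕ) :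
    (y ^ 2 / 4) ^ (k + 1) / ((k + 1) * (k + 1)! * Gamma (k + 1 + 1 / 2)) =
      2 / √π * (y ^ (2 * k + 2) / ((2 * k + 2) * (2 * k + 2)!)) := by
  have hGamma := factorial_mul_Gamma_nat_add_half (k + 1)
  push_cast at hGamma
  have hπ : √π ≠ 0 := (sqrt_pos.mpr pi_pos).ne'
  rw [mul_assoc, hGamma, div_pow, ← pow_mul, mul_add, mul_one]
  field_simp

/-- `Wi₁,₁/₂(x) = (2·Chi(2√x) − 2γ − ln 4 − ln x)/√π`. -/
theorem integral_wright_one_half (x : ℝ) (hx : 0 < x) :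
    ((∑' k : ℕ, x ^ (k + 1) /
        ((k + 1) * Nat.factorial (k + 1) * Real.Gamma ((k : ℝ) + 1 + 1 / 2)))
      = (2 / Real.sqrt π) *
          ∫ t in (0:ℝ)..(2 * Real.sqrt x), (Real.cosh t - 1) / t) ∧
    ((∑' k : ℕ, x ^ (k + 1) /
        ((k + 1) * Nat.factorial (k + 1) * Real.Gamma ((k : ℝ) + 1 + 1 / 2)))
      = -(2 * Real.eulerMascheroniConstant + Real.log 4 + Real.log x
            - 2 * (Real.eulerMascheroniConstant + Real.log (2 * Real.sqrt x)
                + ∫ u in (0:ℝ)..(2 * Real.sqrt x), (Real.cosh u - 1) / u))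
          / Real.sqrt π) := by
  have hx_eq : (2 * √x) ^ 2 / 4 = x := by rw [mul_pow, sq_sqrt hx.le]; ring
  have hseries : (∑' k : ℕ, x ^ (k + 1) / ((k + 1) * (k + 1)! * Gamma (k + 1 + 1 / 2))) =
      2 / √π * ∫ t in (0 : ℝ)..2 * √x, (cosh t - 1) / t := by
    rw [← ((hasSum_integral_cosh_sub_one_div (2 * √x)).mul_left (2 / √π)).tsum_eq]
    congr 1 with k
    rw [← pow_div_mul_factorial_mul_Gamma_add_half, hx_eq]
  have hlog : log (2 * √x) = (log 4 + log x) / 2 := by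
    rw [log_mul two_ne_zero (sqrt_pos.mpr hx).ne', log_sqrt hx.le,
      show (4 : ℝ) = 2 ^ 2 by norm_num, log_pow]
    push_cast
    ring
  refine ⟨hseries, ?_⟩
  rw [hseries, hlog]
  ring
end
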